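/- Let λ > 0, β > 0, ε > 0 with ε < (π/4)·√(β/λ). Suppose ψ : [ε, 2ε] → ℝ is differentiable with ψ'(t) ≥ -(1/β)ψ(t)² - λ for all t ∈ [ε, 2ε] and ψ(ε) = √(βλ)·cot(√(λ/β)·ε). Then ψ(2ε) ≥ √(λβ)·cot(2√(λ/β)·ε) > 0. -/

import Mathlib

open Real Set

lemma hasDerivAt_cot' (x : ℝ) (hx : Real.sin x ≠ 0) :
    HasDerivAt Real.cot (-1 / Real.sin x ^ 2) x := by
  have h := (Real.hasDerivAt_cos x).div (Real.hasDerivAt_sin x) hx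
  have hfun : (Real.cos / Real.sin) = Real.cot := by
    funext y; rw [Pi.div_apply, Real.cot_eq_cos_div_sin]
  rw [hfun] at h
  refine h.congr_deriv ?_
  have := Real.sin_sq_add_cos_sq x
  rw [div_left_inj' (pow_ne_zero 2 hx)]
  nlinarith [this]

/-- ODE comparison with the cotangent solution.  If
`ψ' ≥ -(1/β)ψ² - λ` on `[ε, 2ε]` with `ψ(ε) = √(βλ) cot(√(λ/β) ε)` and
`ε < (π/4)√(β/λ)`, then `ψ(2ε) ≥ √(λβ) cot(2√(λ/β) ε) > 0`. -/
theorem stmt5 (β lam ε : ℝ) (hβ : 0 < β) (hlam : 0 < lam)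
    (hε : 0 < ε) (hε' : ε < (π / 4) * Real.sqrt (β / lam))
    (ψ ψ' : ℝ → ℝ)
    (hderiv : ∀ t ∈ Icc ε (2 * ε), HasDerivAt ψ (ψ' t) t)
    (hineq : ∀ t ∈ Icc ε (2 * ε), -(1 / β) * ψ t ^ 2 - lam ≤ ψ' t)
    (hinit : ψ ε = Real.sqrt (β * lam) * Real.cot (Real.sqrt (lam / β) * ε)) :
    Real.sqrt (lam * β) * Real.cot (2 * Real.sqrt (lam / β) * ε) ≤ ψ (2 * ε) ∧
    0 < Real.sqrt (lam * β) * Real.cot (2 * Real.sqrt (lam / β) * ε) := by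
  set a : ℝ := Real.sqrt (lam / β) with ha_def
  set c : ℝ := Real.sqrt (β * lam) with hc_def
  have ha : 0 < a := Real.sqrt_pos.2 (by positivity)
  have hc : 0 < c := Real.sqrt_pos.2 (by positivity)
  have hc2 : c ^ 2 = β * lam := Real.sq_sqrt (by positivity)
  have hca : c * a = lam := by
    rw [ha_def, hc_def, ← Real.sqrt_mul (by positivity)]
    rw [show β * lam * (lam / β) = lam ^ 2 by field_simp]
    exact Real.sqrt_sq hlam.le
  have hainv : a * Real.sqrt (β / lam) = 1 := by
    rw [ha_def, ← Real.sqrt_mul (by positivity)]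
    rw [show lam / β * (β / lam) = 1 by field_simp]
    exact Real.sqrt_one
  -- the argument bound : for t in [ε, 2ε], 0 < a t < π/2
  have harg : ∀ t ∈ Icc ε (2 * ε), 0 < a * t ∧ a * t < π / 2 := by
    intro t ht
    constructor
    · exact mul_pos ha (lt_of_lt_of_le hε ht.1)
    · have h1 : a * t ≤ a * (2 * ε) := by nlinarith [ht.2]
      have h2 : a * (2 * ε) < a * (2 * ((π / 4) * Real.sqrt (β / lam))) := by
        have := hε'
        nlinarith
      have h3 : a * (2 * ((π / 4) * Real.sqrt (β / lam))) = π / 2 := by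
        have h4 : a * (2 * ((π / 4) * Real.sqrt (β / lam)))
            = (π / 2) * (a * Real.sqrt (β / lam)) := by ring
        rw [h4, hainv, mul_one]
      linarith
  set φ : ℝ → ℝ := fun t => c * Real.cot (a * t) with hφ_def
  have hsin : ∀ t ∈ Icc ε (2 * ε), 0 < Real.sin (a * t) := by
    intro t ht
    obtain ⟨h1, h2⟩ := harg t ht
    exact Real.sin_pos_of_pos_of_lt_pi h1 (lt_trans h2 (by linarith [Real.pi_pos]))
  have hφderiv : ∀ t ∈ Icc ε (2 * ε),
      HasDerivAt φ (-(1 / β) * φ t ^ 2 - lam) t := by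
    intro t ht
    have hs := (hsin t ht).ne'
    have h1 : HasDerivAt (fun t : ℝ => a * t) a t := by
      simpa using (hasDerivAt_id t).const_mul a
    have h2 := ((hasDerivAt_cot' (a * t) hs).comp t h1).const_mul c
    refine h2.congr_deriv ?_
    symm
    have hcot : Real.cot (a * t) = Real.cos (a * t) / Real.sin (a * t) :=
      Real.cot_eq_cos_div_sin _
    have hpy := Real.sin_sq_add_cos_sq (a * t)
    rw [hφ_def]
    simp only
    rw [hcot]
    have hs2 : Real.sin (a * t) ^ 2 ≠ 0 := pow_ne_zero _ hs
    field_simp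
    linear_combination (-(Real.cos (a*t) ^ 2)) * hc2 +
      β * hca + (-(β * lam)) * hpy
  -- continuity
  have hψcont : ContinuousOn ψ (Icc ε (2 * ε)) := fun t ht =>
    (hderiv t ht).continuousAt.continuousWithinAt
  have hφcont : ContinuousOn φ (Icc ε (2 * ε)) := fun t ht =>
    (hφderiv t ht).continuousAt.continuousWithinAt
  -- bound K
  obtain ⟨K, hK⟩ : ∃ K, ∀ t ∈ Icc ε (2 * ε), ‖(1 / β) * (ψ t + φ t)‖ ≤ K := by
    apply IsCompact.exists_bound_of_continuousOn isCompact_Icc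
    exact (continuousOn_const.mul (hψcont.add hφcont))
  set g : ℝ → ℝ := fun t => ψ t - φ t with hg_def
  set F : ℝ → ℝ := fun t => g t * Real.exp (-K * t) with hF_def
  have hgderiv : ∀ t ∈ Icc ε (2 * ε),
      HasDerivAt g (ψ' t - (-(1 / β) * φ t ^ 2 - lam)) t := fun t ht =>
    (hderiv t ht).sub (hφderiv t ht)
  have hFderiv : ∀ t ∈ Icc ε (2 * ε),
      HasDerivAt F ((ψ' t - (-(1 / β) * φ t ^ 2 - lam) - K * g t) * Real.exp (-K * t)) t := by
    intro t ht
    have h1 : HasDerivAt (fun y : ℝ => -K * y) (-K * 1) t := (hasDerivAt_id t).const_mul (-K)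
    have he : HasDerivAt (fun y : ℝ => Real.exp (-K * y))
        (Real.exp (-K * t) * (-K * 1)) t := h1.exp
    have := (hgderiv t ht).mul he
    refine this.congr_deriv ?_
    ring
  have hgε : g ε = 0 := by
    simp only [hg_def, hφ_def, hinit, sub_self]
  -- key comparison
  have key : ∀ t ∈ Icc ε (2 * ε), φ t ≤ ψ t := by
    by_contra hcon
    push_neg at hcon
    obtain ⟨t₀, ht₀, hlt⟩ := hcon
    have hgt₀ : g t₀ < 0 := by simp only [hg_def]; linarith
    have hS_def : True := trivial
    set S : Set ℝ := {t | t ∈ Icc ε t₀ ∧ 0 ≤ g t} with hS_def2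
    have hsubI : Icc ε t₀ ⊆ Icc ε (2 * ε) := Icc_subset_Icc le_rfl ht₀.2
    have hScl : IsClosed S := by
      have hg : ContinuousOn g (Icc ε t₀) :=
        (hψcont.sub hφcont).mono hsubI
      have := hg.preimage_isClosed_of_isClosed isClosed_Icc (isClosed_Ici (a := (0:ℝ)))
      convert this using 1
      rfl
    have hSne : S.Nonempty := ⟨ε, ⟨le_rfl, ht₀.1⟩, hgε.ge⟩
    have hSbdd : BddAbove S := ⟨t₀, fun x hx => hx.1.2⟩
    have hsS0 : sSup S ∈ S := hScl.csSup_mem hSne hSbdd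
    obtain ⟨s, hs_eq, hsS⟩ : ∃ s, s = sSup S ∧ s ∈ S := ⟨sSup S, rfl, hsS0⟩
    have hst₀ : s ≤ t₀ := hsS.1.2
    have hεs : ε ≤ s := hsS.1.1
    have hslt : s < t₀ := lt_of_le_of_ne hst₀ (by rintro rfl; exact absurd hsS.2 (not_le.2 hgt₀))
    have hgneg : ∀ t ∈ Ioc s t₀, g t < 0 := by
      intro t ht
      by_contra h
      push_neg at h
      have hmem : t ∈ S := ⟨⟨le_trans hεs ht.1.le, ht.2⟩, h⟩
      have h2 := le_csSup hSbdd hmem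
      rw [← hs_eq] at h2
      exact absurd h2 (not_le.2 ht.1)
    have hsub2 : Icc s t₀ ⊆ Icc ε (2 * ε) := Icc_subset_Icc hεs ht₀.2
    -- F monotone on [s, t₀]
    have hmono : MonotoneOn F (Icc s t₀) := by
      apply monotoneOn_of_deriv_nonneg (convex_Icc s t₀)
      · intro t ht
        exact ((hgderiv t (hsub2 ht)).mul
          (((hasDerivAt_id t).const_mul (-K)).exp)).continuousAt.continuousWithinAt
      · intro t ht
        rw [interior_Icc] at ht
        exact (hFderiv t (hsub2 (Ioo_subset_Icc_self ht))).differentiableAt.differentiableWithinAt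
      · intro t ht
        rw [interior_Icc] at ht
        have htI : t ∈ Icc ε (2 * ε) := hsub2 (Ioo_subset_Icc_self ht)
        rw [(hFderiv t htI).deriv]
        have hgtneg : g t < 0 := hgneg t ⟨ht.1, ht.2.le⟩
        have h1 : -(1 / β) * ψ t ^ 2 - lam ≤ ψ' t := hineq t htI
        have h2 : ‖(1 / β) * (ψ t + φ t)‖ ≤ K := hK t htI
        have hKb : -((1 / β) * (ψ t + φ t)) ≤ K := by
          have := neg_abs_le ((1 / β) * (ψ t + φ t))
          rw [Real.norm_eq_abs] at h2
          linarith
        have hmain : 0 ≤ ψ' t - (-(1 / β) * φ t ^ 2 - lam) - K * g t := by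
          have hexp : ψ' t - (-(1 / β) * φ t ^ 2 - lam) ≥
              -(1 / β) * (ψ t + φ t) * g t := by
            have : -(1 / β) * ψ t ^ 2 - lam - (-(1 / β) * φ t ^ 2 - lam)
                = -(1 / β) * (ψ t + φ t) * g t := by
              rw [hg_def]; ring
            linarith [h1]
          have h3 : K * g t ≤ -(1 / β) * (ψ t + φ t) * g t := by
            have := mul_le_mul_of_nonpos_right hKb hgtneg.le
            linarith [this]
          linarith
        exact mul_nonneg hmain (Real.exp_pos _).le
    have hFs : 0 ≤ F s := by
      rw [hF_def]; exact mul_nonneg hsS.2 (Real.exp_pos _).le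
    have hFt₀ : F t₀ < 0 := by
      rw [hF_def]
      exact mul_neg_of_neg_of_pos hgt₀ (Real.exp_pos _)
    have := hmono (left_mem_Icc.2 hst₀) (right_mem_Icc.2 hst₀) hst₀
    linarith
  -- conclude
  have hmem : (2 * ε) ∈ Icc ε (2 * ε) := ⟨by linarith, le_rfl⟩
  have hφ2ε : φ (2 * ε) = Real.sqrt (lam * β) * Real.cot (2 * Real.sqrt (lam / β) * ε) := by
    rw [hφ_def]
    simp only
    rw [mul_comm lam β, show a * (2 * ε) = 2 * a * ε by ring]
  have hpos : 0 < Real.sqrt (lam * β) * Real.cot (2 * Real.sqrt (lam / β) * ε) := by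
    rw [← hφ2ε, hφ_def]
    simp only
    obtain ⟨h1, h2⟩ := harg (2 * ε) hmem
    have hcot : Real.cot (a * (2 * ε)) = Real.cos (a * (2 * ε)) / Real.sin (a * (2 * ε)) :=
      Real.cot_eq_cos_div_sin _
    rw [hcot]
    have hcos : 0 < Real.cos (a * (2 * ε)) :=
      Real.cos_pos_of_mem_Ioo ⟨by linarith [Real.pi_pos], h2⟩
    exact mul_pos hc (div_pos hcos (hsin _ hmem))
  exact ⟨hφ2ε ▸ key (2 * ε) hmem, hpos⟩
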